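/- arXiv:1905.03959 — 4 statements merged into one kernel-verified Lean document; each statement's English description precedes it below -/
import Mathlib

section
/- Let g(w) = β̂·δ·∫_{-∞}^∞ max{z, w} dF(z) + (1−β̂)·F(w)·δ·w with δ ∈ (0,1), β̂ ∈ (0,1]. Suppose g is right-continuous with only upward jumps (i.e., g(w) ≥ lim_{u↗w} g(u) for all w), g(w) > w for all w < 0, and {w : g(w) ≤ w} is non-empty. Then w* = inf{w : g(w) ≤ w} satisfies g(w*) = w* and w* ≥ 0. -/
open MeasureTheory Set Filter Topology

/-- `g(w) = β̂·δ·∫ max{z,w} dF(z) + (1−β̂)·F(w)·δ·w`. -/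
noncomputable def gfun (μ : Measure ℝ) (δ βh : ℝ) (w : ℝ) : ℝ :=
  βh * δ * (∫ z, max z w ∂μ) + (1 - βh) * (μ (Set.Iic w)).toReal * δ * w

/-- if `g` is right-continuous with only upward jumps, `g(w) > w` for all
`w < 0`, and `{w : g w ≤ w}` is non-empty, then `w* = inf {w : g w ≤ w}` satisfies
`g(w*) = w*` and `w* ≥ 0`. -/
theorem stmt_4 (μ : Measure ℝ) [IsProbabilityMeasure μ] (hY : Integrable id μ)
    (δ βh : ℝ) (hδ : 0 < δ ∧ δ < 1) (hβh : 0 < βh ∧ βh ≤ 1)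
    (hrc : ∀ w : ℝ, Tendsto (gfun μ δ βh) (𝓝[>] w) (𝓝 (gfun μ δ βh w)))
    (hup : ∀ w L : ℝ, Tendsto (gfun μ δ βh) (𝓝[<] w) (𝓝 L) → L ≤ gfun μ δ βh w)
    (hneg : ∀ w < (0 : ℝ), w < gfun μ δ βh w)
    (hne : {w : ℝ | gfun μ δ βh w ≤ w}.Nonempty) :
    gfun μ δ βh (sInf {w : ℝ | gfun μ δ βh w ≤ w}) = sInf {w : ℝ | gfun μ δ βh w ≤ w} ∧
      0 ≤ sInf {w : ℝ | gfun μ δ βh w ≤ w} := by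
  obtain ⟨hδ0, hδ1⟩ := hδ
  obtain ⟨hβ0, hβ1⟩ := hβh
  set g := gfun μ δ βh with hg
  set S := {w : ℝ | g w ≤ w} with hS
  set W := sInf S with hW
  have hlb : ∀ w ∈ S, (0 : ℝ) ≤ w := by
    intro w hw
    by_contra h
    exact absurd hw (not_le.2 (hneg w (lt_of_not_ge h)))
  have hbdd : BddBelow S := ⟨0, hlb⟩
  have hW0 : 0 ≤ W := le_csInf hne hlb
  -- integrability of max
  have hint : ∀ w : ℝ, Integrable (fun z => max z w) μ := fun w =>
    hY.sup (integrable_const w)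
  -- g(W) ≤ W
  have hle : g W ≤ W := by
    by_cases hmem : W ∈ S
    · exact hmem
    · have hSsub : S ⊆ Ioi W := by
        intro s hs
        rcases lt_or_eq_of_le (csInf_le hbdd hs) with h | h
        · exact h
        · exfalso; apply hmem; rw [hW, h]; exact hs
      have hcl : W ∈ closure S := csInf_mem_closure hne hbdd
      have hneb : (𝓝[S] W).NeBot := mem_closure_iff_nhdsWithin_neBot.1 hcl
      have hmono : 𝓝[S] W ≤ 𝓝[>] W := nhdsWithin_mono _ hSsub
      have t1 : Tendsto g (𝓝[S] W) (𝓝 (g W)) := (hrc W).mono_left hmono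
      have t2 : Tendsto (fun w : ℝ => w) (𝓝[S] W) (𝓝 W) :=
        tendsto_id.mono_left nhdsWithin_le_nhds
      refine le_of_tendsto_of_tendsto t1 t2 ?_
      filter_upwards [self_mem_nhdsWithin] with w hw
      exact hw
  -- g(W) ≥ W
  have hge : W ≤ g W := by
    rcases eq_or_lt_of_le hW0 with h0 | h0
    · rw [← h0]
      have : g 0 = βh * δ * (∫ z, max z 0 ∂μ) := by
        simp [hg, gfun]
      rw [this]
      have hi : 0 ≤ ∫ z, max z 0 ∂μ := integral_nonneg fun z => le_max_right z 0
      have : (0:ℝ) ≤ βh * δ := by positivity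
      exact mul_nonneg this hi
    · -- g is monotone on Ioo 0 W
      have hmonoc : MonotoneOn g (Ioc 0 W) := by
        intro a ha b hb hab
        have hFa : ((μ (Set.Iic a)).toReal : ℝ) ≤ (μ (Set.Iic b)).toReal :=
          ENNReal.toReal_mono (measure_ne_top μ _) (measure_mono (Iic_subset_Iic.2 hab))
        have hI : (∫ z, max z a ∂μ) ≤ ∫ z, max z b ∂μ :=
          integral_mono (hint a) (hint b) fun z => max_le_max le_rfl hab
        have h1 : βh * δ * (∫ z, max z a ∂μ) ≤ βh * δ * (∫ z, max z b ∂μ) := by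
          have : (0:ℝ) ≤ βh * δ := by positivity
          exact mul_le_mul_of_nonneg_left hI this
        have h2 : (1 - βh) * (μ (Set.Iic a)).toReal * δ * a
            ≤ (1 - βh) * (μ (Set.Iic b)).toReal * δ * b := by
          have hβ : (0:ℝ) ≤ 1 - βh := by linarith
          have ha0 : (0:ℝ) ≤ a := ha.1.le
          have hFa0 : (0:ℝ) ≤ (μ (Set.Iic a)).toReal := ENNReal.toReal_nonneg
          gcongr
        simpa [hg, gfun] using add_le_add h1 h2
      have hmono : MonotoneOn g (Ioo 0 W) :=
        hmonoc.mono (Ioo_subset_Ioc_self)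
      have hnon : (Ioo (0:ℝ) W).Nonempty := nonempty_Ioo.2 h0
      have hbddA : BddAbove (g '' Ioo 0 W) := by
        refine ⟨g W, ?_⟩
        rintro _ ⟨x, hx, rfl⟩
        exact hmonoc ⟨hx.1, hx.2.le⟩ ⟨h0, le_rfl⟩ hx.2.le
      have hlim : Tendsto g (𝓝[<] W) (𝓝 (sSup (g '' Ioo 0 W))) :=
        MonotoneOn.tendsto_nhdsWithin_Ioo_left hnon hmono hbddA
      have hL : sSup (g '' Ioo 0 W) ≤ g W := hup W _ hlim
      have hWL : W ≤ sSup (g '' Ioo 0 W) := by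
        have t2 : Tendsto (fun w : ℝ => w) (𝓝[<] W) (𝓝 W) :=
          tendsto_id.mono_left nhdsWithin_le_nhds
        refine le_of_tendsto_of_tendsto t2 hlim ?_
        filter_upwards [self_mem_nhdsWithin] with w hw
        have hwS : w ∉ S := fun hws => absurd (csInf_le hbdd hws) (not_le.2 hw)
        exact (not_le.1 hwS).le
      linarith
  exact ⟨le_antisymm hle hge, hW0⟩
end

section
/- Consider the recursion v_T = y̲ ≤ 0 and v_t = β·g((β̂/β)·v_{t+1})/β̂ for t = T−1, ..., 1 (equivalently (β̂/β)v_t = g((β̂/β)v_{t+1})), where g(w) = β̂δ∫max{z,w}dF(z) + (1−β̂)F(w)δw, δ ∈ (0,1), β, β̂ ∈ (0,1]. Suppose g is non-decreasing on [0,∞), g(w') ≥ g(w) whenever w' ≥ 0 > w, and w* = min{w : g(w) ≤ w} exists with g(w*) = w* and w* ≥ 0. Then (β̂/β)v_t ≤ w* for all t, and the sequence is non-increasing: v_1 ≥ v_2 ≥ ... ≥ v_T. -/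
open MeasureTheory Set

/-- for the recursion `v_T = y̲ ≤ 0`, `(β̂/β)·v_t = g((β̂/β)·v_{t+1})`,
with `g` non-decreasing on `[0,∞)`, `g(w') ≥ g(w)` whenever `w' ≥ 0 > w`, and `w*` the
least fixed point of `g` with `g(w*) = w* ≥ 0`, we have `(β̂/β)·v_t ≤ w*` for all `t`
and `v_1 ≥ v_2 ≥ ... ≥ v_T`. -/
theorem stmt_6 (μ : Measure ℝ) [IsProbabilityMeasure μ] (hY : Integrable id μ)
    (δ β βh : ℝ) (hδ : 0 < δ ∧ δ < 1) (hβ : 0 < β ∧ β ≤ 1) (hβh : 0 < βh ∧ βh ≤ 1)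
    (T : ℕ) (ybar : ℝ) (hybar : ybar ≤ 0)
    (v : ℕ → ℝ) (hvT : v T = ybar)
    (hrec : ∀ t, 1 ≤ t → t < T → (βh / β) * v t = gfun μ δ βh ((βh / β) * v (t + 1)))
    (hmono : ∀ a b : ℝ, 0 ≤ a → a ≤ b → gfun μ δ βh a ≤ gfun μ δ βh b)
    (hcross : ∀ a b : ℝ, b < 0 → 0 ≤ a → gfun μ δ βh b ≤ gfun μ δ βh a)
    (wstar : ℝ) (hfix : gfun μ δ βh wstar = wstar) (hw0 : 0 ≤ wstar)
    (hmin : ∀ w, gfun μ δ βh w ≤ w → wstar ≤ w) :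
    (∀ t, 1 ≤ t → t ≤ T → (βh / β) * v t ≤ wstar) ∧
      (∀ t, 1 ≤ t → t < T → v (t + 1) ≤ v t) := by

  have hpos : 0 < βh / β := div_pos hβh.1 hβ.1
  -- below the fixed point, g(w) ≥ w
  have hbelow : ∀ w, w ≤ wstar → w ≤ gfun μ δ βh w := by
    intro w hw
    by_contra h
    push_neg at h
    have := hmin w h.le
    have : w = wstar := le_antisymm hw this
    rw [this, hfix] at h
    exact lt_irrefl _ h
  have key : ∀ k t, 1 ≤ t → t + k = T → (βh / β) * v t ≤ wstar := by
    intro k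
    induction k with
    | zero =>
      intro t ht hT
      simp only [Nat.add_zero] at hT
      subst hT
      rw [hvT]
      have : (βh / β) * ybar ≤ 0 := mul_nonpos_of_nonneg_of_nonpos hpos.le hybar
      linarith
    | succ k ih =>
      intro t ht hT
      have htT : t < T := by omega
      have ih' : (βh / β) * v (t + 1) ≤ wstar := ih (t + 1) (by omega) (by omega)
      rw [hrec t ht htT]
      rcases le_or_gt 0 ((βh / β) * v (t + 1)) with h0 | h0
      · calc gfun μ δ βh ((βh / β) * v (t + 1)) ≤ gfun μ δ βh wstar :=
              hmono _ _ h0 ih'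
          _ = wstar := hfix
      · calc gfun μ δ βh ((βh / β) * v (t + 1)) ≤ gfun μ δ βh wstar :=
              hcross _ _ h0 hw0
          _ = wstar := hfix
  have part1 : ∀ t, 1 ≤ t → t ≤ T → (βh / β) * v t ≤ wstar := by
    intro t ht hT
    exact key (T - t) t ht (by omega)
  refine ⟨part1, ?_⟩
  intro t ht htT
  have h1 : (βh / β) * v (t + 1) ≤ wstar := part1 (t + 1) (by omega) (by omega)
  have h2 : (βh / β) * v (t + 1) ≤ (βh / β) * v t := by
    rw [hrec t ht htT]
    exact hbelow _ h1
  exact le_of_mul_le_mul_left h2 hpos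
end

section
/- (Finite-support sufficiency.) Suppose a distribution G and continuation values v_1 > v_2 > ... > v_T with stopping probabilities p_t = 1 − G(v_t) satisfy the system ∫_{v_{t+1}}^∞ z dG(z) = (δ^{-1}v_t − (1−p_{t+1})v_{t+1})/β for t = 1,...,T−1. Define a discrete distribution F with T+1 mass points π_0 = E_G[Y | Y ≤ v_T], π_k = E_G[Y | v_{T−k+1} < Y ≤ v_{T−k}] for k = 1,...,T−1, π_T = E_G[Y | v_1 < Y], with probabilities f_0 = 1 − p_T, f_k = p_{T−k+1} − p_{T−k} for k = 1,...,T−1, f_T = p_1 (assuming all these conditioning events have positive G-probability). Then F satisfies π_0 ≤ v_T < π_1 ≤ v_{T−1} < ... ≤ π_{T−1} ≤ v_1 < π_T, satisfies 1 − F(v_t) = p_t for all t, and satisfies the same integral system: ∫_{v_{t+1}}^∞ z dF(z) = ∫_{v_{t+1}}^∞ z dG(z) for all t ∈ {1,...,T−1}. -/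
open MeasureTheory Set

/-! The cells `cell T v k`, `k = 0, …, T`, partition `ℝ`, and the cutoff `v t` separates the cells
`k ≤ T - t`, which lie in `Iic (v t)`, from the cells `k > T - t`, which lie in `Ioi (v t)`.
A conditional mean lies on the same side of every cutoff as its cell, which gives the interlacing
and shows that each half-line bounded by a cutoff contains exactly the atoms of `F` coming from
the cells it contains. Atom `k` carries the mass `G(cell k)` and the first moment
`G(cell k) · π k = ∫_{cell k} z dG`, so masses and first moments of these half-lines agree under
`F` and `G`. -/

/-- The cell between consecutive cutoffs: `A_0 = (−∞, v_T]`, `A_k = (v_{T−k+1}, v_{T−k}]`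
for `k = 1,...,T−1`, `A_T = (v_1, ∞)`. -/
noncomputable def cell (T : ℕ) (v : ℕ → ℝ) (k : ℕ) : Set ℝ :=
  if k = 0 then Set.Iic (v T)
  else if k = T then Set.Ioi (v 1)
  else Set.Ioc (v (T - k + 1)) (v (T - k))

/-- Conditional mean of the identity over a set. -/
noncomputable def condMean (μ : MeasureTheory.Measure ℝ) (s : Set ℝ) : ℝ :=
  (∫ z in s, z ∂μ) / (μ s).toReal

/-- The probabilities `f_0 = 1 − p_T`, `f_k = p_{T−k+1} − p_{T−k}`, `f_T = p_1`. -/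
noncomputable def weight (T : ℕ) (p : ℕ → ℝ) (k : ℕ) : ℝ :=
  if k = 0 then 1 - p T else if k = T then p 1 else p (T - k + 1) - p (T - k)

section dirac

variable {α E ι : Type*} [MeasurableSpace α] [MeasurableSingletonClass α]
  [NormedAddCommGroup E] [NormedSpace ℝ E] [CompleteSpace E]

lemma measureReal_sum_smul_dirac (I : Finset ι) {w : ι → ℝ} (hw : ∀ i ∈ I, 0 ≤ w i)
    (x : ι → α) (S : Set α) [DecidablePred (· ∈ S)] :
    (∑ i ∈ I, ENNReal.ofReal (w i) • Measure.dirac (x i)).real S = ∑ i ∈ I with x i ∈ S, w i := by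
  rw [measureReal_def, Measure.finsetSum_apply,
    ENNReal.toReal_sum fun i _ => by by_cases h : x i ∈ S <;> simp [h], Finset.sum_filter]
  refine Finset.sum_congr rfl fun i hi => ?_
  by_cases h : x i ∈ S <;> simp [h, hw i hi]

lemma setIntegral_sum_smul_dirac (I : Finset ι) {w : ι → ℝ} (hw : ∀ i ∈ I, 0 ≤ w i)
    (x : ι → α) {S : Set α} [DecidablePred (· ∈ S)] (hS : MeasurableSet S) (f : α → E) :
    ∫ z in S, f z ∂(∑ i ∈ I, ENNReal.ofReal (w i) • Measure.dirac (x i)) =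
      ∑ i ∈ I with x i ∈ S, w i • f (x i) := by
  rw [← integral_indicator hS, integral_finsetSum_measure, Finset.sum_filter]
  · refine Finset.sum_congr rfl fun i hi => ?_
    rw [integral_smul_measure, integral_dirac, ENNReal.toReal_ofReal (hw i hi)]
    by_cases h : x i ∈ S <;> simp [h]
  · exact fun i _ => (integrable_dirac enorm_lt_top).smul_measure ENNReal.ofReal_ne_top

end dirac

lemma antitoneOn_Icc_of_succ_lt {T : ℕ} {v : ℕ → ℝ}
    (hv : ∀ t, 1 ≤ t → t < T → v (t + 1) < v t) : AntitoneOn v (Icc 1 T) := by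
  rintro s ⟨hs, -⟩ t ⟨-, ht⟩ hst
  induction t, hst using Nat.le_induction with
  | base => rfl
  | succ n hsn ih => exact (hv n (hs.trans hsn) ht).le.trans (ih (by omega))

section condMean

variable {μ : Measure ℝ} {s : Set ℝ} {c : ℝ}

lemma measureReal_mul_condMean (h0 : μ s ≠ 0) (hfin : μ s ≠ ⊤) :
    μ.real s * condMean μ s = ∫ z in s, z ∂μ :=
  mul_div_cancel₀ _ (ENNReal.toReal_pos h0 hfin).ne'

lemma condMean_le_of_subset_Iic (hs : MeasurableSet s) (h0 : μ s ≠ 0) (hfin : μ s ≠ ⊤)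
    (hint : IntegrableOn (fun z => z) s μ) (hsub : s ⊆ Iic c) : condMean μ s ≤ c := by
  have hle : ∫ z in s, z ∂μ ≤ ∫ _ in s, c ∂μ :=
    setIntegral_mono_on hint (integrableOn_const hfin) hs fun z hz => hsub hz
  rw [setIntegral_const, smul_eq_mul, measureReal_def] at hle
  rw [condMean, div_le_iff₀ (ENNReal.toReal_pos h0 hfin)]
  linarith

lemma lt_condMean_of_subset_Ioi (hs : MeasurableSet s) (h0 : μ s ≠ 0) (hfin : μ s ≠ ⊤)
    (hint : IntegrableOn (fun z => z) s μ) (hsub : s ⊆ Ioi c) : c < condMean μ s := by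
  have hpos : 0 < ∫ z in s, (z - c) ∂μ := by
    rw [setIntegral_pos_iff_support_of_nonneg_ae
      (ae_restrict_of_forall_mem hs fun z hz => sub_nonneg.2 (hsub hz).le)
      (hint.sub (integrableOn_const hfin))]
    have hsupp : s ⊆ Function.support fun z => z - c :=
      fun z hz => sub_ne_zero.2 (hsub hz).ne'
    rwa [inter_eq_right.2 hsupp, pos_iff_ne_zero]
  rw [integral_sub hint (integrableOn_const hfin), setIntegral_const, smul_eq_mul,
    measureReal_def] at hpos
  rw [condMean, lt_div_iff₀ (ENNReal.toReal_pos h0 hfin)]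
  linarith

end condMean

section cell

variable {T : ℕ} {v p : ℕ → ℝ} {k t : ℕ} {μ : Measure ℝ}

lemma cell_zero : cell T v 0 = Iic (v T) := by
  simp [cell]

lemma cell_self (hT : T ≠ 0) : cell T v T = Ioi (v 1) := by
  simp [cell, hT]

lemma cell_of_pos_of_lt (h0 : 0 < k) (hk : k < T) :
    cell T v k = Ioc (v (T - k + 1)) (v (T - k)) := by
  simp [cell, h0.ne', hk.ne]

lemma measurableSet_cell : MeasurableSet (cell T v k) := by
  unfold cell
  split_ifs
  exacts [measurableSet_Iic, measurableSet_Ioi, measurableSet_Ioc]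

lemma cell_subset_Iic (hv : AntitoneOn v (Icc 1 T)) (ht : 1 ≤ t) (htT : t ≤ T)
    (hk : k ≤ T - t) : cell T v k ⊆ Iic (v t) := by
  have hsub : cell T v k ⊆ Iic (v (T - k)) := by
    rcases Nat.eq_zero_or_pos k with rfl | h0
    · rw [cell_zero, Nat.sub_zero]
    · rw [cell_of_pos_of_lt h0 (by omega)]
      exact Ioc_subset_Iic_self
  exact hsub.trans (Iic_subset_Iic.2 (hv ⟨ht, htT⟩ ⟨by omega, by omega⟩ (by omega)))

lemma cell_subset_Ioi (hv : AntitoneOn v (Icc 1 T)) (htT : t ≤ T) (hk : T - t < k)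
    (hkT : k ≤ T) : cell T v k ⊆ Ioi (v t) := by
  have hsub : cell T v k ⊆ Ioi (v (T - k + 1)) := by
    rcases hkT.eq_or_lt with rfl | hkT
    · rw [cell_self (by omega), Nat.sub_self]
    · rw [cell_of_pos_of_lt (by omega) hkT]
      exact Ioc_subset_Ioi_self
  exact hsub.trans (Ioi_subset_Ioi (hv ⟨by omega, by omega⟩ ⟨by omega, htT⟩ (by omega)))

lemma weight_eq_measureReal_cell [IsProbabilityMeasure μ] (hT : 1 ≤ T)
    (hv : AntitoneOn v (Icc 1 T)) (hp : ∀ t, 1 ≤ t → t ≤ T → p t = 1 - μ.real (Iic (v t)))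
    (hk : k ≤ T) : weight T p k = μ.real (cell T v k) := by
  rcases Nat.eq_zero_or_pos k with rfl | h0
  · rw [weight, if_pos rfl, cell_zero, hp T hT le_rfl]
    ring
  rcases hk.eq_or_lt with rfl | hkT
  · rw [weight, if_neg h0.ne', if_pos rfl, cell_self h0.ne', hp 1 le_rfl hT, ← compl_Iic,
      probReal_compl_eq_one_sub measurableSet_Iic]
  · have hle : v (T - k + 1) ≤ v (T - k) :=
      hv ⟨by omega, by omega⟩ ⟨by omega, by omega⟩ (by omega)
    rw [weight, if_neg h0.ne', if_neg hkT.ne, cell_of_pos_of_lt h0 hkT, ← Iic_sdiff_Iic,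
      measureReal_sdiff (Iic_subset_Iic.2 hle) measurableSet_Iic,
      hp (T - k + 1) (by omega) (by omega), hp (T - k) (by omega) (by omega)]
    ring

lemma sum_range_weight {m : ℕ} (hm : m < T) :
    ∑ k ∈ Finset.range (m + 1), weight T p k = 1 - p (T - m) := by
  induction m with
  | zero => simp [weight]
  | succ n ih =>
    rw [Finset.sum_range_succ, ih (by omega), weight, if_neg (by omega), if_neg (by omega),
      show T - (n + 1) + 1 = T - n by omega]
    ring

lemma setIntegral_Ioi_eq_sum_cell {E : Type*} [NormedAddCommGroup E] [NormedSpace ℝ E]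
    (hv : AntitoneOn v (Icc 1 T)) {f : ℝ → E} (hf : Integrable f μ) (ht : 1 ≤ t) (htT : t ≤ T) :
    ∫ z in Ioi (v t), f z ∂μ = ∑ k ∈ Finset.Icc (T - t + 1) T, ∫ z in cell T v k, f z ∂μ := by
  induction t, ht using Nat.le_induction with
  | base =>
    rw [Nat.sub_add_cancel (by omega), Finset.Icc_self, Finset.sum_singleton, cell_self (by omega)]
  | succ n hn ih =>
    have hIcc : Finset.Icc (T - (n + 1) + 1) T = insert (T - n) (Finset.Icc (T - n + 1) T) := by
      ext x
      simp only [Finset.mem_Icc, Finset.mem_insert]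
      omega
    have hcell : cell T v (T - n) = Ioc (v (n + 1)) (v n) := by
      rw [cell_of_pos_of_lt (by omega) (by omega), show T - (T - n) = n by omega]
    rw [hIcc, Finset.sum_insert (by simp), ← ih (by omega), hcell,
      ← setIntegral_union Ioc_disjoint_Ioi_same measurableSet_Ioi hf.integrableOn hf.integrableOn,
      Ioc_union_Ioi_eq_Ioi (show v (n + 1) ≤ v n from hv ⟨hn, by omega⟩ ⟨by omega, htT⟩ (by omega))]

lemma condMean_cell_le_iff [IsFiniteMeasure μ] (hY : Integrable id μ)
    (hv : AntitoneOn v (Icc 1 T)) (hpos : μ (cell T v k) ≠ 0) (ht : 1 ≤ t) (htT : t ≤ T)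
    (hkT : k ≤ T) : condMean μ (cell T v k) ≤ v t ↔ k ≤ T - t := by
  by_cases hk : k ≤ T - t
  · exact iff_of_true (condMean_le_of_subset_Iic measurableSet_cell hpos (measure_ne_top _ _)
      hY.integrableOn (cell_subset_Iic hv ht htT hk)) hk
  · exact iff_of_false (not_le.2 (lt_condMean_of_subset_Ioi measurableSet_cell hpos
      (measure_ne_top _ _) hY.integrableOn (cell_subset_Ioi hv htT (by omega) hkT))) hk

lemma filter_range_condMean_cell_mem_Iic [IsFiniteMeasure μ] (hY : Integrable id μ)
    (hv : AntitoneOn v (Icc 1 T)) (hpos : ∀ k ≤ T, μ (cell T v k) ≠ 0) (ht : 1 ≤ t)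
    (htT : t ≤ T) :
    {k ∈ Finset.range (T + 1) | condMean μ (cell T v k) ∈ Iic (v t)} =
      Finset.range (T - t + 1) := by
  ext k
  simp only [Finset.mem_filter, Finset.mem_range, mem_Iic, Nat.lt_succ_iff]
  constructor
  · rintro ⟨hk, h⟩
    exact (condMean_cell_le_iff hY hv (hpos k hk) ht htT hk).1 h
  · intro hk
    exact ⟨by omega, (condMean_cell_le_iff hY hv (hpos k (by omega)) ht htT (by omega)).2 hk⟩

lemma filter_range_condMean_cell_mem_Ioi [IsFiniteMeasure μ] (hY : Integrable id μ)
    (hv : AntitoneOn v (Icc 1 T)) (hpos : ∀ k ≤ T, μ (cell T v k) ≠ 0) (ht : 1 ≤ t)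
    (htT : t ≤ T) :
    {k ∈ Finset.range (T + 1) | condMean μ (cell T v k) ∈ Ioi (v t)} =
      Finset.Icc (T - t + 1) T := by
  ext k
  simp only [Finset.mem_filter, Finset.mem_range, mem_Ioi, Finset.mem_Icc, Nat.lt_succ_iff]
  constructor
  · rintro ⟨hk, h⟩
    have := (condMean_cell_le_iff hY hv (hpos k hk) ht htT hk).not.1 (not_le.2 h)
    exact ⟨by omega, hk⟩
  · rintro ⟨hk, hkT⟩
    exact ⟨hkT, not_le.1 ((condMean_cell_le_iff hY hv (hpos k hkT) ht htT hkT).not.2 (by omega))⟩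

end cell

theorem stmt_14_general (μ : Measure ℝ) [IsProbabilityMeasure μ] (hY : Integrable id μ)
    (T : ℕ) (hT : 1 ≤ T) (v p : ℕ → ℝ)
    (hv : ∀ t, 1 ≤ t → t < T → v (t + 1) < v t)
    (hp : ∀ t, 1 ≤ t → t ≤ T → p t = 1 - (μ (Iic (v t))).toReal)
    (hpos : ∀ k ≤ T, 0 < μ (cell T v k)) :
    let π : ℕ → ℝ := fun k => condMean μ (cell T v k)
    let ν : Measure ℝ :=
      ∑ k ∈ Finset.range (T + 1), ENNReal.ofReal (weight T p k) • Measure.dirac (π k)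
    (∀ k < T, π k ≤ v (T - k) ∧ v (T - k) < π (k + 1)) ∧
      (∀ t, 1 ≤ t → t ≤ T → 1 - (ν (Iic (v t))).toReal = p t) ∧
      (∀ t, 1 ≤ t → t < T →
        ∫ z in Ioi (v (t + 1)), z ∂ν = ∫ z in Ioi (v (t + 1)), z ∂μ) := by
  intro π ν
  have hv' : AntitoneOn v (Icc 1 T) := antitoneOn_Icc_of_succ_lt hv
  have hpos' : ∀ k ≤ T, μ (cell T v k) ≠ 0 := fun k hk => (hpos k hk).ne'
  have hw : ∀ k ≤ T, weight T p k = μ.real (cell T v k) :=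
    fun k hk => weight_eq_measureReal_cell hT hv' hp hk
  have hw0 : ∀ k ∈ Finset.range (T + 1), 0 ≤ weight T p k :=
    fun k hk => (hw k (Finset.mem_range_succ_iff.1 hk)).symm ▸ measureReal_nonneg
  refine ⟨fun k hk => ⟨?_, ?_⟩, fun t ht htT => ?_, fun t ht htT => ?_⟩
  · exact (condMean_cell_le_iff hY hv' (hpos' k hk.le) (t := T - k) (by omega) (by omega)
      hk.le).2 (by omega)
  · exact not_le.1 ((condMean_cell_le_iff hY hv' (hpos' (k + 1) hk) (t := T - k) (by omega)
      (by omega) hk).not.2 (by omega))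
  · rw [← measureReal_def, measureReal_sum_smul_dirac _ hw0,
      filter_range_condMean_cell_mem_Iic hY hv' hpos' ht htT, sum_range_weight (by omega),
      Nat.sub_sub_self htT]
    ring
  · rw [setIntegral_sum_smul_dirac _ hw0 _ measurableSet_Ioi,
      filter_range_condMean_cell_mem_Ioi hY hv' hpos' (by omega) htT,
      setIntegral_Ioi_eq_sum_cell (f := fun z => z) hv' hY (by omega) htT]
    refine Finset.sum_congr rfl fun k hk => ?_
    rw [smul_eq_mul, hw k (Finset.mem_Icc.1 hk).2,
      measureReal_mul_condMean (hpos' k (Finset.mem_Icc.1 hk).2) (measure_ne_top _ _)]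

/-- finite-support sufficiency: if `G` (law `μ`) with strictly decreasing
cutoffs `v` and stopping probabilities `p_t = 1 − G(v_t)` satisfies the integral system,
then the discrete distribution `ν` with mass points `π_k = E_G[Y | cell k]` and weights
`f_k` interlaces the cutoffs, matches all stopping probabilities `1 − ν(Iic v_t) = p_t`,
and matches all truncated expectations `∫_{v_{t+1}}^∞ z dν = ∫_{v_{t+1}}^∞ z dG`. -/
theorem stmt_14 (μ : Measure ℝ) [IsProbabilityMeasure μ] (hY : Integrable id μ)
    (δ β : ℝ) (hδ : 0 < δ ∧ δ ≤ 1) (hβ : 0 < β ∧ β ≤ 1)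
    (T : ℕ) (hT : 1 ≤ T) (v p : ℕ → ℝ)
    (hv : ∀ t, 1 ≤ t → t < T → v (t + 1) < v t)
    (hp : ∀ t, 1 ≤ t → t ≤ T → p t = 1 - (μ (Iic (v t))).toReal)
    (hpos : ∀ k ≤ T, 0 < μ (cell T v k))
    (hsys : ∀ t, 1 ≤ t → t < T →
      ∫ z in Ioi (v (t + 1)), z ∂μ = (δ⁻¹ * v t - (1 - p (t + 1)) * v (t + 1)) / β) :
    let π : ℕ → ℝ := fun k => condMean μ (cell T v k)
    let ν : Measure ℝ :=
      ∑ k ∈ Finset.range (T + 1), ENNReal.ofReal (weight T p k) • Measure.dirac (π k)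
    (∀ k < T, π k ≤ v (T - k) ∧ v (T - k) < π (k + 1)) ∧
      (∀ t, 1 ≤ t → t ≤ T → 1 - (ν (Iic (v t))).toReal = p t) ∧
      (∀ t, 1 ≤ t → t < T →
        ∫ z in Ioi (v (t + 1)), z ∂ν = ∫ z in Ioi (v (t + 1)), z ∂μ) :=
  stmt_14_general μ hY T hT v p hv hp hpos
end

section
/- Consider the forward recursion π_k − π_{k−1} = (1 − β)·δ·f_{k−1}·π_{k−1} + δ·(Σ_{j=0}^{k−2} f_j)·(π_{k−1} − π_{k−2}) for k ∈ {2,...,T}, with π_0 = y̲ − c_1, π_1 = y̲, where δ, β ∈ (0,1], y̲ ∈ ℝ, f_0 ∈ (0,1), all f_j ≥ 0, Σf_j ≤ 1, and suppose whenever π_{k−1} > y̲ we may bound π_k − π_{k−1} ≥ (1−β)δy̲ + δf_0(π_{k−1} − π_{k−2}). If c_1 > max{0, −(1−β)δy̲ · (1 − γ^{T−1})/((1−γ)γ^{T−1})} with γ = δf_0 ∈ (0,1), then π_0 < π_1 < ... < π_T, i.e., the solution is strictly increasing. -/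
/-- the forward recursion
`π_k − π_{k−1} = (1−β)·δ·f_{k−1}·π_{k−1} + δ·(Σ_{j<k−1} f_j)·(π_{k−1} − π_{k−2})`
with `π_0 = y̲ − c_1`, `π_1 = y̲`, `γ = δ·f_0 ∈ (0,1)`, together with the bound
`π_k − π_{k−1} ≥ (1−β)δy̲ + δf_0(π_{k−1} − π_{k−2})` whenever `π_{k−1} > y̲`, yields a
strictly increasing solution provided
`c_1 > max{0, −(1−β)δy̲·(1−γ^{T−1})/((1−γ)γ^{T−1})}`. -/
theorem stmt_16 (T : ℕ) (hT : 2 ≤ T)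
    (δ β ybar c₁ : ℝ) (f : ℕ → ℝ)
    (hδ : 0 < δ ∧ δ ≤ 1) (hβ : 0 < β ∧ β ≤ 1)
    (hf0 : 0 < f 0 ∧ f 0 < 1) (hf : ∀ j, 0 ≤ f j)
    (hfsum : ∑ j ∈ Finset.range (T + 1), f j ≤ 1)
    (hγ : 0 < δ * f 0 ∧ δ * f 0 < 1)
    (π : ℕ → ℝ) (hπ0 : π 0 = ybar - c₁) (hπ1 : π 1 = ybar)
    (hrec : ∀ k, 2 ≤ k → k ≤ T →
      π k - π (k - 1) =
        (1 - β) * δ * f (k - 1) * π (k - 1) +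
          δ * (∑ j ∈ Finset.range (k - 1), f j) * (π (k - 1) - π (k - 2)))
    (hbound : ∀ k, 2 ≤ k → k ≤ T → ybar < π (k - 1) →
      (1 - β) * δ * ybar + δ * f 0 * (π (k - 1) - π (k - 2)) ≤ π k - π (k - 1))
    (hc₁ : c₁ > max 0 (-((1 - β) * δ * ybar) * (1 - (δ * f 0) ^ (T - 1)) /
      ((1 - δ * f 0) * (δ * f 0) ^ (T - 1)))) :
    ∀ k, 1 ≤ k → k ≤ T → π (k - 1) < π k := by
  obtain ⟨hδ0, hδ1⟩ := hδ
  obtain ⟨hβ0, hβ1⟩ := hβ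
  obtain ⟨hγ0, hγ1⟩ := hγ
  set γ : ℝ := δ * f 0 with hγdef
  set α : ℝ := (1 - β) * δ * ybar with hαdef
  set A : ℝ := min α 0 with hAdef
  have hc₁0 : 0 < c₁ := lt_of_le_of_lt (le_max_left _ _) hc₁
  have h1γ : 0 < 1 - γ := by linarith
  have hγT : 0 < γ ^ (T - 1) := pow_pos hγ0 _
  have hA0 : A ≤ 0 := min_le_right _ _
  have hAα : A ≤ α := min_le_left _ _
  clear_value A α γ
  -- key positivity at exponent T-1
  have hkey : 0 < A * (1 - γ ^ (T - 1)) / (1 - γ) + γ ^ (T - 1) * c₁ := by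
    rcases le_or_gt 0 α with hα | hα
    · have hA : A = 0 := by simp [hAdef, min_eq_right hα]
      rw [hA]
      have : 0 < γ ^ (T - 1) * c₁ := mul_pos hγT hc₁0
      simpa using this
    · have hA : A = α := by simp [hAdef, min_eq_left hα.le]
      have h2 : -α * (1 - γ ^ (T - 1)) / ((1 - γ) * γ ^ (T - 1)) < c₁ :=
        lt_of_le_of_lt (le_max_right _ _) hc₁
      have hd : 0 < (1 - γ) * γ ^ (T - 1) := mul_pos h1γ hγT
      rw [div_lt_iff₀ hd] at h2
      rw [hA, div_add' _ _ _ (ne_of_gt h1γ), lt_div_iff₀ h1γ]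
      nlinarith
  have hγpowle : ∀ m : ℕ, m ≤ T - 1 → γ ^ (T - 1) ≤ γ ^ m := fun m hm =>
    pow_le_pow_of_le_one hγ0.le hγ1.le hm
  -- positivity of S m for m ≤ T-1
  have hSpos : ∀ m : ℕ, m ≤ T - 1 → 0 < A * (1 - γ ^ m) / (1 - γ) + γ ^ m * c₁ := by
    intro m hm
    have h1 := hγpowle m hm
    have h2 : A * (1 - γ ^ (T - 1)) ≤ A * (1 - γ ^ m) := by nlinarith
    have h3 : γ ^ (T - 1) * c₁ ≤ γ ^ m * c₁ := by nlinarith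
    have h4 : A * (1 - γ ^ (T - 1)) / (1 - γ) ≤ A * (1 - γ ^ m) / (1 - γ) :=
      (div_le_div_iff_of_pos_right h1γ).mpr h2
    calc (0:ℝ) < A * (1 - γ ^ (T - 1)) / (1 - γ) + γ ^ (T - 1) * c₁ := hkey
      _ ≤ A * (1 - γ ^ m) / (1 - γ) + γ ^ m * c₁ := by linarith
  have hf1le : f 1 ≤ 1 := by
    have := Finset.single_le_sum (f := f) (fun j _ => hf j)
      (Finset.mem_range.mpr (by omega : 1 < T + 1))
    linarith
  -- main induction
  have main : ∀ m : ℕ, 1 ≤ m → m + 1 ≤ T →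
      A * (1 - γ ^ m) / (1 - γ) + γ ^ m * c₁ ≤ π (m + 1) - π m ∧ ybar ≤ π m := by
    intro m hm
    induction m, hm using Nat.le_induction with
    | base =>
      intro hle
      constructor
      · have hr := hrec 2 (by omega) hle
        norm_num [Finset.sum_range_one] at hr
        have hbase : A + γ * c₁ ≤ π 2 - π 1 := by
          rw [hr, hπ1, hπ0]
          have hfb : A ≤ (1 - β) * δ * f 1 * ybar := by
            rcases le_or_gt 0 ybar with hy | hy
            · have h0 : 0 ≤ (1 - β) * δ * f 1 * ybar :=
                mul_nonneg (mul_nonneg (mul_nonneg (by linarith) hδ0.le) (hf 1)) hy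
              linarith
            · have h2 : (1 - β) * δ * (ybar * (1 - f 1)) ≤ 0 :=
                mul_nonpos_of_nonneg_of_nonpos
                  (mul_nonneg (by linarith) hδ0.le)
                  (mul_nonpos_of_nonpos_of_nonneg hy.le (by linarith))
              nlinarith [hAα, hαdef]
          have : ybar - (ybar - c₁) = c₁ := by ring
          rw [this]
          nlinarith
        calc A * (1 - γ ^ 1) / (1 - γ) + γ ^ 1 * c₁
            = A + γ * c₁ := by field_simp
          _ ≤ π 2 - π 1 := hbase
      · exact hπ1.ge
    | succ m hm ih =>
      intro hle
      obtain ⟨ihS, ihy⟩ := ih (by omega)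
      have hSm : 0 < A * (1 - γ ^ m) / (1 - γ) + γ ^ m * c₁ := hSpos m (by omega)
      have hπgt : ybar < π (m + 1) := by linarith
      have hb := hbound (m + 2) (by omega) (by omega) (by
        have e : m + 2 - 1 = m + 1 := by omega
        rw [e]; exact hπgt)
      have e1 : m + 2 - 1 = m + 1 := by omega
      have e2 : m + 2 - 2 = m := by omega
      rw [e1, e2] at hb
      constructor
      · have hγd : γ * (A * (1 - γ ^ m) / (1 - γ) + γ ^ m * c₁) ≤ γ * (π (m + 1) - π m) :=
          mul_le_mul_of_nonneg_left ihS hγ0.le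
        have h5 : A + γ * (A * (1 - γ ^ m) / (1 - γ) + γ ^ m * c₁)
            ≤ π (m + 2) - π (m + 1) := by linarith
        have hstep : A + γ * (A * (1 - γ ^ m) / (1 - γ) + γ ^ m * c₁)
            = A * (1 - γ ^ (m + 1)) / (1 - γ) + γ ^ (m + 1) * c₁ := by
          rw [pow_succ]
          field_simp
          ring
        linarith [h5, hstep.le, hstep.ge]
      · linarith
  -- conclude
  intro k hk1 hkT
  rcases Nat.lt_or_ge k 2 with hk2 | hk2
  · have : k = 1 := by omega
    subst this
    simp only [Nat.sub_self]
    rw [hπ0, hπ1]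
    norm_num
    linarith
  · have hm : 1 ≤ k - 1 := by omega
    obtain ⟨hS, _⟩ := main (k - 1) hm (by omega)
    have hpos := hSpos (k - 1) (by omega)
    have e : k - 1 + 1 = k := by omega
    rw [e] at hS
    linarith
end
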